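/- Let M, N, m be positive integers with m ≥ 2, and let ζ_1, …, ζ_{m−1} ∈ P^-_N(M). If (u_1, …, u_m) and (v_1, …, v_m), with all u_i, v_i ∈ P^+_N(M), are two (possibly identical) solutions of the system, then Σ_{i=1}^{m−1} ~u_i(z)·v_i(z) + u_m(z)·~v_m(z) ∈ P^+(M), i.e., all coefficients of this Laurent matrix polynomial at negative powers of z vanish. -/

import Mathlib

noncomputable section

/-- The type of `M × M` Laurent matrix polynomials over `ℂ`. -/
abbrev LMP (M : ℕ) := Matrix (Fin M) (Fin M) (LaurentPolynomial ℂ)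

/-- The adjoint of a scalar Laurent polynomial: `~p(z) = Σ conj(A_n) z^{-n}`. -/
def lpAdj (p : LaurentPolynomial ℂ) : LaurentPolynomial ℂ :=
  AddMonoidAlgebra.ofCoeff (Finsupp.equivMapDomain (Equiv.neg ℤ) (Finsupp.mapRange (starRingEnd ℂ) (map_zero _) p.coeff))

/-- The adjoint of a Laurent matrix polynomial: `~P(z) = Σ A_nᴴ z^{-n}`. -/
def adjM {n : Type*} (P : Matrix n n (LaurentPolynomial ℂ)) :
    Matrix n n (LaurentPolynomial ℂ) :=
  fun i j => lpAdj (P j i)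

/-- The coefficient of `z^n` of a Laurent matrix polynomial, an `M × M` complex matrix. -/
def coeffM {M : ℕ} (P : LMP M) (n : ℤ) : Matrix (Fin M) (Fin M) ℂ :=
  fun i j => (P i j).coeff n

/-- `P^+(M)`: Laurent matrix polynomials with vanishing coefficients at negative powers. -/
def Pplus (M : ℕ) : Set (LMP M) := {P | ∀ n : ℤ, n < 0 → coeffM P n = 0}

/-- `P^-(M)`: Laurent matrix polynomials with vanishing coefficients at positive powers. -/
def Pminus (M : ℕ) : Set (LMP M) := {P | ∀ n : ℤ, 0 < n → coeffM P n = 0}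

/-- `P^+_N(M)`: coefficients vanish unless `0 ≤ n ≤ N`. -/
def PplusN (M N : ℕ) : Set (LMP M) := {P | ∀ n : ℤ, (n < 0 ∨ (N : ℤ) < n) → coeffM P n = 0}

/-- `P^-_N(M)`: coefficients vanish unless `-N ≤ n ≤ 0`. -/
def PminusN (M N : ℕ) : Set (LMP M) := {P | ∀ n : ℤ, (n < -(N : ℤ) ∨ 0 < n) → coeffM P n = 0}

/-- `(x_1, …, x_{m-1}, x_m)` is a solution of the system (2.2). -/
def IsSolution (M N m : ℕ) (ζ : Fin (m - 1) → LMP M)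
    (x : Fin (m - 1) → LMP M) (xm : LMP M) : Prop :=
  (∀ j, x j ∈ PplusN M N) ∧ xm ∈ PplusN M N ∧
    (∀ j, xm * ζ j - adjM (x j) ∈ Pplus M) ∧
    ((∑ j, ζ j * x j) + adjM xm ∈ Pplus M)

/-!
Membership in `P^+(M)` is entrywise membership in the subring of Laurent polynomials without
negative powers, so `P^+(M)` is a subring of `LMP M`. The sum in question equals
`u_m (Σ ζ_j v_j + ~v_m) - Σ (u_m ζ_i - ~u_i) v_i`, and every factor here lies in `P^+(M)` by the
equations of the two solutions.
-/

namespace LaurentPolynomial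

variable {R : Type*} [Ring R]

def nonnegSubring : Subring R[T;T⁻¹] where
  carrier := {p | ∀ n < 0, p.coeff n = 0}
  zero_mem' _ _ := rfl
  one_mem' n hn := by rw [← T_zero, T_apply, if_neg hn.ne']
  add_mem' hp hq n hn := by
    rw [AddMonoidAlgebra.coeff_add, Finsupp.add_apply, hp n hn, hq n hn, add_zero]
  neg_mem' hp n hn := by rw [AddMonoidAlgebra.coeff_neg, Finsupp.neg_apply, hp n hn, neg_zero]
  mul_mem' {p q} hp hq n hn := by
    classical
    by_contra hne
    obtain ⟨a, ha, b, hb, rfl⟩ := Finset.mem_add.mp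
      (AddMonoidAlgebra.support_coeff_mul_subset p q (Finsupp.mem_support_iff.mpr hne))
    have ha : 0 ≤ a := not_lt.mp fun h => Finsupp.mem_support_iff.mp ha (hp a h)
    have hb : 0 ≤ b := not_lt.mp fun h => Finsupp.mem_support_iff.mp hb (hq b h)
    omega

end LaurentPolynomial

open LaurentPolynomial

lemma Pplus_eq_matrix_nonnegSubring (M : ℕ) :
    Pplus M = ((nonnegSubring.matrix : Subring (LMP M)) : Set (LMP M)) := by
  ext P
  show (∀ n < 0, coeffM P n = 0) ↔ ∀ i j, ∀ n < 0, (P i j).coeff n = 0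
  exact ⟨fun h i j n hn => congrFun₂ (h n hn) i j, fun h n hn => Matrix.ext fun i j => h i j n hn⟩

-- `copy` makes membership in `PplusSubring M` definitionally membership in `Pplus M`.
def PplusSubring (M : ℕ) : Subring (LMP M) :=
  nonnegSubring.matrix.copy (Pplus M) (Pplus_eq_matrix_nonnegSubring M)

lemma PplusN_subset_Pplus (M N : ℕ) : PplusN M N ⊆ Pplus M :=
  fun _ hP n hn => hP n (Or.inl hn)

theorem lemma_sum_mem_Pplus_general (M N m : ℕ)
    (ζ : Fin (m - 1) → LMP M)
    (u : Fin (m - 1) → LMP M) (um : LMP M)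
    (v : Fin (m - 1) → LMP M) (vm : LMP M)
    (hu : IsSolution M N m ζ u um) (hv : IsSolution M N m ζ v vm) :
    (∑ i, adjM (u i) * v i) + um * adjM vm ∈ Pplus M := by
  obtain ⟨-, humN, hu_eq, -⟩ := hu
  obtain ⟨hvN, -, -, hv_eq⟩ := hv
  have hsum : (∑ i, adjM (u i) * v i) + um * adjM vm
      = um * ((∑ j, ζ j * v j) + adjM vm) - ∑ i, (um * ζ i - adjM (u i)) * v i := by
    simp only [mul_add, Finset.mul_sum, sub_mul, Finset.sum_sub_distrib, mul_assoc]
    abel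
  rw [hsum]
  show _ ∈ PplusSubring M
  exact sub_mem (mul_mem (PplusN_subset_Pplus M N humN) hv_eq)
    (sum_mem fun i _ => mul_mem (hu_eq i) (PplusN_subset_Pplus M N (hvN i)))

/-- relation (3.3): for any two solutions `u`, `v` of the system,
`Σ_{i=1}^{m-1} ~u_i · v_i + u_m · ~v_m ∈ P^+(M)`. -/
theorem lemma_sum_mem_Pplus (M N m : ℕ) (hM : 0 < M) (hN : 0 < N) (hm : 2 ≤ m)
    (ζ : Fin (m - 1) → LMP M) (hζ : ∀ j, ζ j ∈ PminusN M N)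
    (u : Fin (m - 1) → LMP M) (um : LMP M)
    (v : Fin (m - 1) → LMP M) (vm : LMP M)
    (hu : IsSolution M N m ζ u um) (hv : IsSolution M N m ζ v vm) :
    (∑ i, adjM (u i) * v i) + um * adjM vm ∈ Pplus M :=
  lemma_sum_mem_Pplus_general M N m ζ u um v vm hu hv
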